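/- Let G = ⟨V,E,F⟩ be a directed mixed graph and let i, j be two distinct vertices of G. Then the following are equivalent: (i) there is an inducing path in G between i and j; (ii) there is an inducing walk in G between i and j; (iii) for every set Z ⊆ V ∖ {i,j}, the nodes i and j are σ-connected given Z in G. -/
import Mathlib


namespace CausalGraphs

variable {V : Type*}

/-- A directed mixed graph (DMG): directed edges `dir` (`i → j`) and
bidirected edges `bi` (`i ↔ j`), with no self-loops. -/
structure DMG (V : Type*) where
  dir : V → V → Prop
  bi : V → V → Prop
  dir_irrefl : ∀ i, ¬ dir i i
  bi_irrefl : ∀ i, ¬ bi i i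

namespace DMG

/-- `G.Anc i j`: `i ∈ an(G, j)`, i.e. there is a (possibly trivial) directed path
from `i` to `j` in `G`. -/
def Anc (G : DMG V) (i j : V) : Prop :=
  Relation.ReflTransGen G.dir i j

/-- `G.Scc i j`: `i ∈ scc(G, j)`, i.e. `i` and `j` lie in the same strongly
connected component of `G`. -/
def Scc (G : DMG V) (i j : V) : Prop :=
  G.Anc i j ∧ G.Anc j i

/-- There is a bidirected edge between `i` and `j` (bidirected edges are unordered). -/
def BiEdge (G : DMG V) (i j : V) : Prop :=
  G.bi i j ∨ G.bi j i

/-- `G` has no directed cycle (i.e. `G` is an ADMG). -/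
def Acyclic (G : DMG V) : Prop :=
  ∀ i j, G.dir i j → ¬ G.Anc j i

end DMG

/-- A walk of length `len` is recorded by its vertices `vert 0, …, vert len` and,
for each edge index `k < len`, the edge marks: `intoL k` (resp. `intoR k`) is `true`
iff the `k`-th edge has an arrowhead at `vert k` (resp. at `vert (k+1)`). -/
structure Walk (V : Type*) where
  len : ℕ
  vert : ℕ → V
  intoL : ℕ → Bool
  intoR : ℕ → Bool

namespace Walk

def first (w : Walk V) : V := w.vert 0

def last (w : Walk V) : V := w.vert w.len

/-- The walk is an actual walk in a DMG `G`: each step traverses a directed edge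
(in either direction) or a bidirected edge of `G`, with the corresponding marks. -/
def ValidOn (G : DMG V) (w : Walk V) : Prop :=
  ∀ k, k < w.len →
    (w.intoL k = false ∧ w.intoR k = true ∧ G.dir (w.vert k) (w.vert (k+1))) ∨
    (w.intoL k = true ∧ w.intoR k = false ∧ G.dir (w.vert (k+1)) (w.vert k)) ∨
    (w.intoL k = true ∧ w.intoR k = true ∧ G.BiEdge (w.vert k) (w.vert (k+1)))

/-- `k` is a non-endpoint position of the walk. -/
def Interior (w : Walk V) (k : ℕ) : Prop := 0 < k ∧ k < w.len

/-- The non-endpoint node `vert k` is a collider on the walk: both adjacent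
edges have an arrowhead at it. -/
def ColliderAt (w : Walk V) (k : ℕ) : Prop :=
  w.Interior k ∧ w.intoR (k-1) = true ∧ w.intoL k = true

/-- The non-endpoint node `vert k` is a non-collider on the walk. -/
def NonColliderAt (w : Walk V) (k : ℕ) : Prop :=
  w.Interior k ∧ ¬ (w.intoR (k-1) = true ∧ w.intoL k = true)

/-- The edge on the first-endpoint side of position `k` is directed out of
`vert k`, pointing to the neighbour `vert (k-1)` on the walk. -/
def PointsLeft (w : Walk V) (k : ℕ) : Prop :=
  w.intoL (k-1) = true ∧ w.intoR (k-1) = false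

/-- The edge on the last-endpoint side of position `k` is directed out of
`vert k`, pointing to the neighbour `vert (k+1)` on the walk. -/
def PointsRight (w : Walk V) (k : ℕ) : Prop :=
  w.intoL k = false ∧ w.intoR k = true

/-- The walk is a path: all its vertices are distinct. -/
def IsPath (w : Walk V) : Prop :=
  ∀ a, a ≤ w.len → ∀ b, b ≤ w.len → w.vert a = w.vert b → a = b

/-- The walk is into its first node (arrowhead at the first node). -/
def IntoFirst (w : Walk V) : Prop := 0 < w.len ∧ w.intoL 0 = true

/-- The walk is into its last node (arrowhead at the last node). -/
def IntoLast (w : Walk V) : Prop := 0 < w.len ∧ w.intoR (w.len - 1) = true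

/-- The walk is σ-blocked by the set `C`. -/
def SigmaBlocked (G : DMG V) (w : Walk V) (C : Set V) : Prop :=
  w.first ∈ C ∨ w.last ∈ C ∨
  (∃ k, w.ColliderAt k ∧ ¬ ∃ c ∈ C, G.Anc (w.vert k) c) ∨
  (∃ k, w.NonColliderAt k ∧ w.vert k ∈ C ∧
    ((w.PointsLeft k ∧ ¬ G.Scc (w.vert k) (w.vert (k-1))) ∨
     (w.PointsRight k ∧ ¬ G.Scc (w.vert k) (w.vert (k+1)))))

/-- The walk is d-blocked by the set `C`. -/
def DBlocked (G : DMG V) (w : Walk V) (C : Set V) : Prop :=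
  w.first ∈ C ∨ w.last ∈ C ∨
  (∃ k, w.ColliderAt k ∧ ¬ ∃ c ∈ C, G.Anc (w.vert k) c) ∨
  (∃ k, w.NonColliderAt k ∧ w.vert k ∈ C)

/-- The walk is inducing: every collider on it is an ancestor of one of the two
endpoints, and every non-endpoint non-collider only has outgoing directed edges
to its neighbours on the walk that lie in the same strongly connected component. -/
def Inducing (G : DMG V) (w : Walk V) : Prop :=
  (∀ k, w.ColliderAt k → G.Anc (w.vert k) w.first ∨ G.Anc (w.vert k) w.last) ∧
  (∀ k, w.NonColliderAt k →
    (w.PointsLeft k → G.Scc (w.vert k) (w.vert (k-1))) ∧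
    (w.PointsRight k → G.Scc (w.vert k) (w.vert (k+1))))

end Walk

namespace DMG

/-- `A` and `B` are σ-separated given `C` in `G`. -/
def SigmaSep (G : DMG V) (A B C : Set V) : Prop :=
  ∀ w : Walk V, w.ValidOn G → w.first ∈ A → w.last ∈ B → w.SigmaBlocked G C

/-- `A` and `B` are d-separated given `C` in `G`. -/
def DSep (G : DMG V) (A B C : Set V) : Prop :=
  ∀ w : Walk V, w.ValidOn G → w.first ∈ A → w.last ∈ B → w.DBlocked G C

/-- Nodes `i` and `j` are σ-connected given `C` in `G`. -/
def SigmaConnected (G : DMG V) (i j : V) (C : Set V) : Prop :=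
  ∃ w : Walk V, w.ValidOn G ∧ w.first = i ∧ w.last = j ∧ ¬ w.SigmaBlocked G C

/-- The σ-independence model of `G`. -/
def IMsigma (G : DMG V) : Set (Set V × Set V × Set V) :=
  { t | G.SigmaSep t.1 t.2.1 t.2.2 }

/-- The d-independence model of `G`. -/
def IMd (G : DMG V) : Set (Set V × Set V × Set V) :=
  { t | G.DSep t.1 t.2.1 t.2.2 }

/-- There is an inducing walk between `i` and `j` in `G`. -/
def InducingWalk (G : DMG V) (i j : V) : Prop :=
  ∃ w : Walk V, w.ValidOn G ∧ w.first = i ∧ w.last = j ∧ w.Inducing G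

/-- There is an inducing path between `i` and `j` in `G`. -/
def InducingPath (G : DMG V) (i j : V) : Prop :=
  ∃ w : Walk V, w.ValidOn G ∧ w.first = i ∧ w.last = j ∧ w.IsPath ∧ w.Inducing G

/-- There is an inducing walk between `i` and `j` in `G` that is into `j`. -/
def InducingWalkIntoLast (G : DMG V) (i j : V) : Prop :=
  ∃ w : Walk V, w.ValidOn G ∧ w.first = i ∧ w.last = j ∧ w.Inducing G ∧ w.IntoLast

/-- There is an inducing walk between `i` and `j` in `G` that is into both `i` and `j`. -/
def InducingWalkIntoBoth (G : DMG V) (i j : V) : Prop :=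
  ∃ w : Walk V, w.ValidOn G ∧ w.first = i ∧ w.last = j ∧ w.Inducing G ∧ w.IntoFirst ∧ w.IntoLast

/-- `G'` is an acyclification of `G`. -/
def IsAcyclification (G G' : DMG V) : Prop :=
  G'.Acyclic ∧
  (∀ i j, ¬ G.Scc i j →
    ((G'.dir i j ↔ ∃ k, G.Scc k j ∧ G.dir i k) ∧
     (G'.bi i j ↔ ∃ k, G.Scc k j ∧ G.bi i k))) ∧
  (∀ i j, i ≠ j → G.Scc i j → (G'.dir i j ∨ G'.dir j i ∨ G'.bi i j))

end DMG

/-- Edge marks of a partial ancestral graph. -/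
inductive Mark : Type
  | tail
  | arrow
  | circle
deriving DecidableEq

/-- A directed partial ancestral graph (DPAG). `mark i j` is the edge mark at `j`
on the edge between `i` and `j` (only meaningful when `adj i j`). Allowed edge
types are `→`, `←`, `↔`, `∘→`, `←∘` and `∘—∘`; there are no directed and no
almost directed cycles. -/
structure DPAG (V : Type*) where
  adj : V → V → Prop
  mark : V → V → Mark
  adj_symm : ∀ i j, adj i j → adj j i
  adj_irrefl : ∀ i, ¬ adj i i
  tail_imp_arrow : ∀ i j, adj i j → mark j i = Mark.tail → mark i j = Mark.arrow
  no_directed_cycle : ∀ i, ¬ Relation.TransGen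
    (fun a b => adj a b ∧ mark a b = Mark.arrow ∧ mark b a = Mark.tail) i i
  no_almost_directed_cycle : ∀ i j, Relation.ReflTransGen
    (fun a b => adj a b ∧ mark a b = Mark.arrow ∧ mark b a = Mark.tail) i j →
    ¬ (adj i j ∧ mark i j = Mark.arrow ∧ mark j i = Mark.arrow)

/-- A directed edge `i → j` with respect to raw adjacency/mark data. -/
def DirEdgeOn (adj : V → V → Prop) (mark : V → V → Mark) (i j : V) : Prop :=
  adj i j ∧ mark i j = Mark.arrow ∧ mark j i = Mark.tail

/-- The directed edge `i → j` is definitely visible, with respect to raw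
adjacency/mark data: there is a node `k` not adjacent to `j` such that either
the edge between `k` and `i` is into `i`, or there is a path between `k` and `i`
that is into `i` on which every non-endpoint node is a collider and a parent of `j`. -/
def DefinitelyVisibleOn (adj : V → V → Prop) (mark : V → V → Mark) (i j : V) : Prop :=
  DirEdgeOn adj mark i j ∧
  ∃ k, ¬ adj k j ∧
    ((adj k i ∧ mark k i = Mark.arrow) ∨
     (∃ n, ∃ p : ℕ → V, 0 < n ∧ p 0 = k ∧ p n = i ∧
       (∀ a, a ≤ n → ∀ b, b ≤ n → p a = p b → a = b) ∧
       (∀ m, m < n → adj (p m) (p (m+1))) ∧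
       mark (p (n-1)) i = Mark.arrow ∧
       (∀ m, 0 < m → m < n →
         (mark (p (m-1)) (p m) = Mark.arrow ∧ mark (p (m+1)) (p m) = Mark.arrow) ∧
         DirEdgeOn adj mark (p m) j)))

namespace DPAG

/-- `i → j` in `P`. -/
def DirEdge (P : DPAG V) (i j : V) : Prop := DirEdgeOn P.adj P.mark i j

/-- `i ↔ j` in `P`. -/
def BiEdge (P : DPAG V) (i j : V) : Prop :=
  P.adj i j ∧ P.mark i j = Mark.arrow ∧ P.mark j i = Mark.arrow

/-- `i *→ j` in `P`: an edge between `i` and `j` with an arrowhead at `j`. -/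
def ArrowAt (P : DPAG V) (i j : V) : Prop := P.adj i j ∧ P.mark i j = Mark.arrow

/-- The directed edge `i → j` of `P` is definitely visible in `P`. -/
def DefinitelyVisible (P : DPAG V) (i j : V) : Prop :=
  DefinitelyVisibleOn P.adj P.mark i j

/-- The DPAG `P` contains the DMG `G`. -/
def Contains (P : DPAG V) (G : DMG V) : Prop :=
  (∀ i j, i ≠ j → (P.adj i j ↔ G.InducingPath i j)) ∧
  (∀ i j, P.ArrowAt i j → ¬ G.Anc j i) ∧
  (∀ i j, P.DirEdge i j → G.Anc i j)

/-- `p 0, …, p n` is a possibly directed path in `P`: consecutive vertices are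
adjacent, no edge has an arrowhead at the endpoint nearer `p 0`, and all
vertices are distinct. -/
def PossiblyDirectedPathOn (P : DPAG V) (n : ℕ) (p : ℕ → V) : Prop :=
  (∀ k, k < n → P.adj (p k) (p (k+1)) ∧ P.mark (p (k+1)) (p k) ≠ Mark.arrow) ∧
  (∀ a, a ≤ n → ∀ b, b ≤ n → p a = p b → a = b)

/-- The path `p 0, …, p n` is uncovered: every consecutive triple is unshielded. -/
def UncoveredOn (P : DPAG V) (n : ℕ) (p : ℕ → V) : Prop :=
  ∀ k, k + 2 ≤ n → ¬ P.adj (p k) (p (k+2))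

/-- There is a possibly directed path from `i` to `j` in `P`. -/
def PDPath (P : DPAG V) (i j : V) : Prop :=
  ∃ n, ∃ p : ℕ → V, p 0 = i ∧ p n = j ∧ P.PossiblyDirectedPathOn n p

end DPAG

/-- JCI Assumption 1 (exogeneity): no system variable causes any context variable
(`K` is the set of context nodes; its complement is the set of system nodes). -/
def JCI1 (G : DMG V) (K : Set V) : Prop :=
  ∀ i k, i ∉ K → k ∈ K → ¬ G.dir i k

/-- JCI Assumption 2 (randomization): no pair of a system and a context variable
is confounded. -/
def JCI2 (G : DMG V) (K : Set V) : Prop :=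
  ∀ i k, i ∉ K → k ∈ K → ¬ G.BiEdge i k

/-- JCI Assumption 3 (genericity): every pair of distinct context variables is
connected by a bidirected edge and by no directed edge. -/
def JCI3 (G : DMG V) (K : Set V) : Prop :=
  ∀ k k', k ∈ K → k' ∈ K → k ≠ k' → (G.bi k k' ∧ ¬ G.dir k k')

/-- An independence model on `V`: a set of triples of subsets of `V`. -/
abbrev IndepModel (V : Type*) := Set (Set V × Set V × Set V)

/-- Background knowledge `Ψ` is compatible with the acyclification. -/
def CompatibleWithAcyclification (Ψ : DMG V → Prop) : Prop :=
  ∀ G : DMG V, Ψ G →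
    (∃ G', G.IsAcyclification G' ∧ Ψ G') ∧
    (∀ i j : V, G.Anc i j → ∃ G', G.IsAcyclification G' ∧ Ψ G' ∧ G'.Anc i j) ∧
    (∀ i j : V, ¬ G.Anc i j → ∀ G', G.IsAcyclification G' → Ψ G' → ¬ G'.Anc i j)

section InducingAux

open Walk

variable {V : Type*} {G : DMG V} {Z : Set V} {i j : V}

lemma exists_dirpath {v x : V} (h : G.Anc v x) :
    ∃ n, ∃ q : ℕ → V, q 0 = v ∧ q n = x ∧ (∀ m, m < n → G.dir (q m) (q (m+1))) ∧
      (∀ m, m ≤ n → G.Anc v (q m)) := by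
  have h' : Relation.ReflTransGen G.dir v x := h
  clear h
  induction h' with
  | refl =>
    exact ⟨0, fun _ => v, rfl, rfl, fun m hm => absurd hm (by omega),
      fun m _ => Relation.ReflTransGen.refl⟩
  | @tail b c hvb hbc ih =>
    obtain ⟨n, q, h0, hn, hstep, hanc⟩ := ih
    refine ⟨n+1, fun m => if m < n+1 then q m else c,
      by dsimp only; rw [if_pos (by omega)]; exact h0,
      by dsimp only; rw [if_neg (by omega)], ?_, ?_⟩
    · intro m hm
      dsimp only
      by_cases h : m + 1 < n + 1
      · rw [if_pos (by omega : m < n + 1), if_pos h]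
        exact hstep m (by omega)
      · have hmn : m = n := by omega
        subst hmn
        rw [if_pos (by omega : m < m + 1), if_neg (by omega : ¬ m + 1 < m + 1), hn]
        exact hbc
    · intro m hm
      dsimp only
      by_cases h : m < n + 1
      · rw [if_pos h]
        exact hanc m (by omega)
      · have hmn : m = n + 1 := by omega
        subst hmn
        rw [if_neg (by omega : ¬ n + 1 < n + 1)]
        exact Relation.ReflTransGen.tail (hn ▸ hanc n le_rfl) hbc

/-- Invariant used in the surgery argument for (walk → σ-connected). -/
def InvC (G : DMG V) (Z : Set V) (i j : V) (w : Walk V) : Prop :=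
  w.ValidOn G ∧ w.first = i ∧ w.last = j ∧
  (∀ k, w.ColliderAt k →
    G.Anc (w.vert k) i ∨ G.Anc (w.vert k) j ∨ ∃ c ∈ Z, G.Anc (w.vert k) c) ∧
  (∀ k, w.NonColliderAt k → w.vert k ∉ Z ∨
     ((w.PointsLeft k → G.Scc (w.vert k) (w.vert (k-1))) ∧
      (w.PointsRight k → G.Scc (w.vert k) (w.vert (k+1)))))

open Classical in
/-- The set of "bad" colliders (not ancestors of Z) on a walk. -/
noncomputable def badset (G : DMG V) (Z : Set V) (w : Walk V) : Finset ℕ :=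
  (Finset.range (w.len + 1)).filter fun k => w.ColliderAt k ∧ ¬ ∃ c ∈ Z, G.Anc (w.vert k) c

lemma mem_badset {w : Walk V} {m : ℕ} :
    m ∈ badset G Z w ↔ m < w.len + 1 ∧ w.ColliderAt m ∧ ¬ ∃ c ∈ Z, G.Anc (w.vert m) c := by
  classical
  simp [badset]

lemma not_blocked_of_invC (hi : i ∉ Z) (hj : j ∉ Z) {w : Walk V} (h : InvC G Z i j w)
    (hb : badset G Z w = ∅) : ¬ w.SigmaBlocked G Z := by
  obtain ⟨hv, hf, hl, hcol, hnc⟩ := h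
  rintro (h1 | h1 | ⟨k, hk, hno⟩ | ⟨k, hk, hkZ, hpt⟩)
  · exact hi (hf ▸ h1)
  · exact hj (hl ▸ h1)
  · have hmem : k ∈ badset G Z w := mem_badset.mpr ⟨by have := hk.1.2; omega, hk, hno⟩
    rw [hb] at hmem
    exact absurd hmem (Finset.notMem_empty k)
  · rcases hnc k hk with h | h
    · exact h hkZ
    · rcases hpt with ⟨hp, hs⟩ | ⟨hp, hs⟩
      · exact hs (h.1 hp)
      · exact hs (h.2 hp)

/-- Replace the prefix of `w` up to position `k` by the reverse of a directed
path `q` from `w.vert k` to the first endpoint. -/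
def prefRepl (w : Walk V) (k n : ℕ) (q : ℕ → V) : Walk V where
  len := n + (w.len - k)
  vert m := if m < n then q (n - m) else w.vert (m - n + k)
  intoL m := if m < n then true else w.intoL (m - n + k)
  intoR m := if m < n then false else w.intoR (m - n + k)

/-- Replace the suffix of `w` from position `k` on by a directed path `q`
from `w.vert k` to the last endpoint. -/
def sufRepl (w : Walk V) (k n : ℕ) (q : ℕ → V) : Walk V where
  len := k + n
  vert m := if m < k then w.vert m else q (m - k)
  intoL m := if m < k then w.intoL m else false
  intoR m := if m < k then w.intoR m else true

lemma prefRepl_invC {w : Walk V} (h : InvC G Z i j w) {k : ℕ} (hkc : w.ColliderAt k)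
    (hbad : ¬ ∃ c ∈ Z, G.Anc (w.vert k) c)
    {n : ℕ} {q : ℕ → V} (hq0 : q 0 = w.vert k) (hqn : q n = i)
    (hstep : ∀ m, m < n → G.dir (q m) (q (m+1)))
    (hanc : ∀ m, m ≤ n → G.Anc (w.vert k) (q m)) :
    InvC G Z i j (prefRepl w k n q) ∧
      (badset G Z (prefRepl w k n q)).card < (badset G Z w).card := by
  obtain ⟨hv, hf, hl, hcol, hnc⟩ := h
  have hk0 : 0 < k := hkc.1.1
  have hklen : k < w.len := hkc.1.2
  have hlen : (prefRepl w k n q).len = n + (w.len - k) := rfl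
  have hvge : ∀ m, n ≤ m → (prefRepl w k n q).vert m = w.vert (m - n + k) := by
    intro m hm; exact if_neg (by omega)
  have hvle : ∀ m, m ≤ n → (prefRepl w k n q).vert m = q (n - m) := by
    intro m hm
    rcases lt_or_eq_of_le hm with h' | h'
    · exact if_pos h'
    · subst h'
      rw [hvge m le_rfl]
      have e : m - m + k = k := by omega
      rw [e, Nat.sub_self]
      exact hq0.symm
  have hLge : ∀ m, n ≤ m → (prefRepl w k n q).intoL m = w.intoL (m - n + k) := by
    intro m hm; exact if_neg (by omega)
  have hLlt : ∀ m, m < n → (prefRepl w k n q).intoL m = true := by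
    intro m hm; exact if_pos hm
  have hRge : ∀ m, n ≤ m → (prefRepl w k n q).intoR m = w.intoR (m - n + k) := by
    intro m hm; exact if_neg (by omega)
  have hRlt : ∀ m, m < n → (prefRepl w k n q).intoR m = false := by
    intro m hm; exact if_pos hm
  have hcolchar : ∀ m, (prefRepl w k n q).ColliderAt m →
      n < m ∧ w.ColliderAt (m - n + k) ∧ (prefRepl w k n q).vert m = w.vert (m - n + k) := by
    intro m hm
    obtain ⟨⟨hm0, hmlen⟩, hR, hL⟩ := hm
    rw [hlen] at hmlen
    have hnm : n < m := by
      by_contra hc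
      push_neg at hc
      have hx : (prefRepl w k n q).intoR (m - 1) = false := hRlt _ (by omega)
      rw [hR] at hx
      exact Bool.noConfusion hx
    have hR' : w.intoR (m - n + k - 1) = true := by
      have hx := hRge (m-1) (by omega)
      rw [hR] at hx
      have e : (m-1) - n + k = m - n + k - 1 := by omega
      rw [e] at hx
      exact hx.symm
    have hL' : w.intoL (m - n + k) = true := by
      rw [← hLge m (by omega)]; exact hL
    exact ⟨hnm, ⟨⟨by omega, by omega⟩, hR', hL'⟩, hvge m (by omega)⟩
  have hval : (prefRepl w k n q).ValidOn G := by
    intro m hm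
    rw [hlen] at hm
    by_cases hmn : m < n
    · right; left
      refine ⟨hLlt m hmn, hRlt m hmn, ?_⟩
      rw [hvle m (by omega), hvle (m+1) (by omega)]
      have e : n - m = (n - (m+1)) + 1 := by omega
      rw [e]
      exact hstep (n - (m+1)) (by omega)
    · push_neg at hmn
      have hp : m - n + k < w.len := by omega
      have e1 := hvge m hmn
      have e2 : (prefRepl w k n q).vert (m+1) = w.vert (m - n + k + 1) := by
        rw [hvge (m+1) (by omega)]
        congr 1
        omega
      rw [hLge m hmn, hRge m hmn, e1, e2]
      exact hv _ hp
  have hfst : (prefRepl w k n q).first = i := by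
    show (prefRepl w k n q).vert 0 = i
    rw [hvle 0 (Nat.zero_le _), Nat.sub_zero, hqn]
  have hlst : (prefRepl w k n q).last = j := by
    show (prefRepl w k n q).vert (n + (w.len - k)) = j
    rw [hvge _ (by omega)]
    have e : n + (w.len - k) - n + k = w.len := by omega
    rw [e]
    exact hl
  have hkmem : k ∈ badset G Z w := mem_badset.mpr ⟨by omega, hkc, hbad⟩
  refine ⟨⟨hval, hfst, hlst, ?_, ?_⟩, ?_⟩
  · intro m hm
    obtain ⟨hnm, hC, hveq⟩ := hcolchar m hm
    rw [hveq]
    exact hcol _ hC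
  · intro m hm
    obtain ⟨⟨hm0, hmlen⟩, hnotc⟩ := hm
    rw [hlen] at hmlen
    by_cases hmn : m ≤ n
    · left
      rw [hvle m hmn]
      intro hmem
      exact hbad ⟨q (n - m), hmem, hanc _ (by omega)⟩
    · push_neg at hmn
      have hnc' : w.NonColliderAt (m - n + k) := by
        refine ⟨⟨by omega, by omega⟩, ?_⟩
        rintro ⟨hA, hB⟩
        refine hnotc ⟨?_, ?_⟩
        · rw [hRge (m-1) (by omega)]
          have e : (m-1) - n + k = m - n + k - 1 := by omega
          rw [e]
          exact hA
        · rw [hLge m (by omega)]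
          exact hB
      rcases hnc _ hnc' with hx | hx
      · left
        rw [hvge m (by omega)]
        exact hx
      · right
        constructor
        · rintro ⟨hA, hB⟩
          have e : (m-1) - n + k = m - n + k - 1 := by omega
          rw [hLge (m-1) (by omega), e] at hA
          rw [hRge (m-1) (by omega), e] at hB
          have := hx.1 ⟨hA, hB⟩
          rw [hvge m (by omega), hvge (m-1) (by omega), e]
          exact this
        · rintro ⟨hA, hB⟩
          rw [hLge m (by omega)] at hA
          rw [hRge m (by omega)] at hB
          have := hx.2 ⟨hA, hB⟩
          have e : (m+1) - n + k = m - n + k + 1 := by omega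
          rw [hvge m (by omega), hvge (m+1) (by omega), e]
          exact this
  · have hgt : ∀ m ∈ badset G Z (prefRepl w k n q), n < m := by
      intro m hm
      exact (hcolchar m (mem_badset.mp hm).2.1).1
    have hsub : ∀ m ∈ badset G Z (prefRepl w k n q), m - n + k ∈ (badset G Z w).erase k := by
      intro m hm
      obtain ⟨hrange, hCm, hno⟩ := mem_badset.mp hm
      obtain ⟨hnm, hC, hveq⟩ := hcolchar m hCm
      rw [Finset.mem_erase]
      refine ⟨by omega, mem_badset.mpr ⟨by have := hC.1.2; omega, hC, ?_⟩⟩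
      rw [← hveq]
      exact hno
    have hinj : Set.InjOn (fun m => m - n + k) (badset G Z (prefRepl w k n q)) := by
      intro m1 h1 m2 h2 he
      have g1 := hgt m1 h1
      have g2 := hgt m2 h2
      have he' : m1 - n + k = m2 - n + k := he
      omega
    calc (badset G Z (prefRepl w k n q)).card
        ≤ ((badset G Z w).erase k).card := Finset.card_le_card_of_injOn _ hsub hinj
      _ < (badset G Z w).card := Finset.card_erase_lt_of_mem hkmem

lemma sufRepl_invC {w : Walk V} (h : InvC G Z i j w) {k : ℕ} (hkc : w.ColliderAt k)
    (hbad : ¬ ∃ c ∈ Z, G.Anc (w.vert k) c)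
    {n : ℕ} {q : ℕ → V} (hq0 : q 0 = w.vert k) (hqn : q n = j)
    (hstep : ∀ m, m < n → G.dir (q m) (q (m+1)))
    (hanc : ∀ m, m ≤ n → G.Anc (w.vert k) (q m)) :
    InvC G Z i j (sufRepl w k n q) ∧
      (badset G Z (sufRepl w k n q)).card < (badset G Z w).card := by
  obtain ⟨hv, hf, hl, hcol, hnc⟩ := h
  have hk0 : 0 < k := hkc.1.1
  have hklen : k < w.len := hkc.1.2
  have hlen : (sufRepl w k n q).len = k + n := rfl
  have hvge : ∀ m, k ≤ m → (sufRepl w k n q).vert m = q (m - k) := by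
    intro m hm; exact if_neg (by omega)
  have hvle : ∀ m, m ≤ k → (sufRepl w k n q).vert m = w.vert m := by
    intro m hm
    rcases lt_or_eq_of_le hm with h' | h'
    · exact if_pos h'
    · subst h'
      rw [hvge m le_rfl, Nat.sub_self]
      exact hq0
  have hLlt : ∀ m, m < k → (sufRepl w k n q).intoL m = w.intoL m := by
    intro m hm; exact if_pos hm
  have hLge : ∀ m, k ≤ m → (sufRepl w k n q).intoL m = false := by
    intro m hm; exact if_neg (by omega)
  have hRlt : ∀ m, m < k → (sufRepl w k n q).intoR m = w.intoR m := by
    intro m hm; exact if_pos hm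
  have hRge : ∀ m, k ≤ m → (sufRepl w k n q).intoR m = true := by
    intro m hm; exact if_neg (by omega)
  have hcolchar : ∀ m, (sufRepl w k n q).ColliderAt m →
      m < k ∧ w.ColliderAt m ∧ (sufRepl w k n q).vert m = w.vert m := by
    intro m hm
    obtain ⟨⟨hm0, hmlen⟩, hR, hL⟩ := hm
    rw [hlen] at hmlen
    have hmk : m < k := by
      by_contra hc
      push_neg at hc
      have hx : (sufRepl w k n q).intoL m = false := hLge _ hc
      rw [hL] at hx
      exact Bool.noConfusion hx
    have hR' : w.intoR (m - 1) = true := by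
      rw [← hRlt (m-1) (by omega)]
      exact hR
    have hL' : w.intoL m = true := by
      rw [← hLlt m hmk]
      exact hL
    exact ⟨hmk, ⟨⟨hm0, by omega⟩, hR', hL'⟩, hvle m (by omega)⟩
  have hval : (sufRepl w k n q).ValidOn G := by
    intro m hm
    rw [hlen] at hm
    by_cases hmk : m < k
    · have e1 := hvle m (by omega)
      have e2 := hvle (m+1) (by omega)
      rw [hLlt m hmk, hRlt m hmk, e1, e2]
      exact hv m (by omega)
    · push_neg at hmk
      left
      refine ⟨hLge m hmk, hRge m hmk, ?_⟩
      rw [hvge m hmk, hvge (m+1) (by omega)]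
      have e : m + 1 - k = (m - k) + 1 := by omega
      rw [e]
      exact hstep _ (by omega)
  have hfst : (sufRepl w k n q).first = i := by
    show (sufRepl w k n q).vert 0 = i
    rw [hvle 0 (Nat.zero_le _)]
    exact hf
  have hlst : (sufRepl w k n q).last = j := by
    show (sufRepl w k n q).vert (k + n) = j
    rw [hvge _ (by omega)]
    have e : k + n - k = n := by omega
    rw [e]
    exact hqn
  have hkmem : k ∈ badset G Z w := mem_badset.mpr ⟨by omega, hkc, hbad⟩
  refine ⟨⟨hval, hfst, hlst, ?_, ?_⟩, ?_⟩
  · intro m hm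
    obtain ⟨hmk, hC, hveq⟩ := hcolchar m hm
    rw [hveq]
    exact hcol _ hC
  · intro m hm
    obtain ⟨⟨hm0, hmlen⟩, hnotc⟩ := hm
    rw [hlen] at hmlen
    by_cases hmk : m < k
    · have hnc' : w.NonColliderAt m := by
        refine ⟨⟨hm0, by omega⟩, ?_⟩
        rintro ⟨hA, hB⟩
        exact hnotc ⟨by rw [hRlt (m-1) (by omega)]; exact hA, by rw [hLlt m hmk]; exact hB⟩
      rcases hnc _ hnc' with hx | hx
      · left
        rw [hvle m (by omega)]
        exact hx
      · right
        constructor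
        · rintro ⟨hA, hB⟩
          rw [hLlt (m-1) (by omega)] at hA
          rw [hRlt (m-1) (by omega)] at hB
          have := hx.1 ⟨hA, hB⟩
          rw [hvle m (by omega), hvle (m-1) (by omega)]
          exact this
        · rintro ⟨hA, hB⟩
          rw [hLlt m hmk] at hA
          rw [hRlt m hmk] at hB
          have := hx.2 ⟨hA, hB⟩
          rw [hvle m (by omega), hvle (m+1) (by omega)]
          exact this
    · push_neg at hmk
      left
      rw [hvge m hmk]
      intro hmem
      exact hbad ⟨q (m - k), hmem, hanc _ (by omega)⟩
  · have hsub : badset G Z (sufRepl w k n q) ⊆ (badset G Z w).erase k := by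
      intro m hm
      obtain ⟨hrange, hCm, hno⟩ := mem_badset.mp hm
      obtain ⟨hmk, hC, hveq⟩ := hcolchar m hCm
      rw [Finset.mem_erase]
      refine ⟨by omega, mem_badset.mpr ⟨by omega, hC, ?_⟩⟩
      rw [← hveq]
      exact hno
    calc (badset G Z (sufRepl w k n q)).card
        ≤ ((badset G Z w).erase k).card := Finset.card_le_card hsub
      _ < (badset G Z w).card := Finset.card_erase_lt_of_mem hkmem

lemma connected_of_invC (hi : i ∉ Z) (hj : j ∉ Z) :
    ∀ N (w : Walk V), (badset G Z w).card ≤ N → InvC G Z i j w →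
      G.SigmaConnected i j Z := by
  intro N
  induction N with
  | zero =>
    intro w hc h
    have hb : badset G Z w = ∅ := Finset.card_eq_zero.mp (le_antisymm hc (Nat.zero_le _))
    exact ⟨w, h.1, h.2.1, h.2.2.1, not_blocked_of_invC hi hj h hb⟩
  | succ N ih =>
    intro w hc h
    by_cases hb : badset G Z w = ∅
    · exact ⟨w, h.1, h.2.1, h.2.2.1, not_blocked_of_invC hi hj h hb⟩
    · obtain ⟨k, hkmem⟩ := Finset.nonempty_iff_ne_empty.mpr hb
      obtain ⟨hkr, hkC, hkno⟩ := mem_badset.mp hkmem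
      rcases h.2.2.2.1 k hkC with hAi | hAj | hex
      · obtain ⟨n, q, hq0, hqn, hstep, hanc⟩ := exists_dirpath hAi
        obtain ⟨hinv, hlt⟩ := prefRepl_invC h hkC hkno hq0 hqn hstep hanc
        exact ih _ (by omega) hinv
      · obtain ⟨n, q, hq0, hqn, hstep, hanc⟩ := exists_dirpath hAj
        obtain ⟨hinv, hlt⟩ := sufRepl_invC h hkC hkno hq0 hqn hstep hanc
        exact ih _ (by omega) hinv
      · exact absurd hex hkno

lemma connected_of_inducingWalk (h : G.InducingWalk i j) :
    ∀ Z : Set V, i ∉ Z → j ∉ Z → G.SigmaConnected i j Z := by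
  intro Z hi hj
  obtain ⟨w, hv, hf, hl, hind⟩ := h
  refine connected_of_invC hi hj (badset G Z w).card w le_rfl ⟨hv, hf, hl, ?_, ?_⟩
  · intro k hk
    rcases hind.1 k hk with h' | h'
    · exact Or.inl (hf ▸ h')
    · exact Or.inr (Or.inl (hl ▸ h'))
  · intro k hk
    exact Or.inr (hind.2 k hk)

/-- The separating set `an({i,j}) \ {i,j}`. -/
def Z0 (G : DMG V) (i j : V) : Set V :=
  {v | (G.Anc v i ∨ G.Anc v j) ∧ v ≠ i ∧ v ≠ j}

lemma Rlem {w : Walk V} (hv : w.ValidOn G) (hl : w.last = j)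
    (hnb : ¬ w.SigmaBlocked G (Z0 G i j)) :
    ∀ d k, w.len - k = d → k < w.len → w.intoL k = false →
      G.Anc (w.vert k) i ∨ G.Anc (w.vert k) j := by
  intro d
  induction d using Nat.strong_induction_on with
  | _ d ih =>
    intro k hd hk hL
    have hdx : w.intoR k = true ∧ G.dir (w.vert k) (w.vert (k+1)) := by
      rcases hv k hk with ⟨h1, h2, h3⟩ | ⟨h1, h2, h3⟩ | ⟨h1, h2, h3⟩
      · exact ⟨h2, h3⟩
      · rw [hL] at h1; exact Bool.noConfusion h1
      · rw [hL] at h1; exact Bool.noConfusion h1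
    have hstep : G.Anc (w.vert k) (w.vert (k+1)) := Relation.ReflTransGen.single hdx.2
    by_cases hend : k + 1 = w.len
    · right
      have e : w.vert (k+1) = j := by rw [hend]; exact hl
      rw [← e]
      exact hstep
    · by_cases hcol : w.intoL (k+1) = true
      · have hC : w.ColliderAt (k+1) := ⟨⟨by omega, by omega⟩, hdx.1, hcol⟩
        have hex : ∃ c ∈ Z0 G i j, G.Anc (w.vert (k+1)) c := by
          by_contra hno
          exact hnb (Or.inr (Or.inr (Or.inl ⟨k+1, hC, hno⟩)))
        obtain ⟨c, hcZ, hAc⟩ := hex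
        rcases hcZ.1 with h | h
        · exact Or.inl (hstep.trans (hAc.trans h))
        · exact Or.inr (hstep.trans (hAc.trans h))
      · have hL1 : w.intoL (k+1) = false := by
          rcases Bool.eq_false_or_eq_true (w.intoL (k+1)) with h | h
          · exact absurd h hcol
          · exact h
        rcases ih (w.len - (k+1)) (by omega) (k+1) rfl (by omega) hL1 with h | h
        · exact Or.inl (hstep.trans h)
        · exact Or.inr (hstep.trans h)

lemma Llem {w : Walk V} (hv : w.ValidOn G) (hf : w.first = i)
    (hnb : ¬ w.SigmaBlocked G (Z0 G i j)) :
    ∀ k, k < w.len → w.intoR k = false →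
      G.Anc (w.vert (k+1)) i ∨ G.Anc (w.vert (k+1)) j := by
  intro k
  induction k using Nat.strong_induction_on with
  | _ k ih =>
    intro hk hR
    have hdx : w.intoL k = true ∧ G.dir (w.vert (k+1)) (w.vert k) := by
      rcases hv k hk with ⟨h1, h2, h3⟩ | ⟨h1, h2, h3⟩ | ⟨h1, h2, h3⟩
      · rw [hR] at h2; exact Bool.noConfusion h2
      · exact ⟨h1, h3⟩
      · rw [hR] at h2; exact Bool.noConfusion h2
    have hstep : G.Anc (w.vert (k+1)) (w.vert k) := Relation.ReflTransGen.single hdx.2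
    by_cases h0 : k = 0
    · left
      subst h0
      have e : w.vert 0 = i := hf
      rw [← e]
      exact hstep
    · by_cases hcol : w.intoR (k-1) = true
      · have hC : w.ColliderAt k := ⟨⟨by omega, hk⟩, hcol, hdx.1⟩
        have hex : ∃ c ∈ Z0 G i j, G.Anc (w.vert k) c := by
          by_contra hno
          exact hnb (Or.inr (Or.inr (Or.inl ⟨k, hC, hno⟩)))
        obtain ⟨c, hcZ, hAc⟩ := hex
        rcases hcZ.1 with h | h
        · exact Or.inl (hstep.trans (hAc.trans h))
        · exact Or.inr (hstep.trans (hAc.trans h))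
      · have hR1 : w.intoR (k-1) = false := by
          rcases Bool.eq_false_or_eq_true (w.intoR (k-1)) with h | h
          · exact absurd h hcol
          · exact h
        have hrec := ih (k-1) (by omega) (by omega) hR1
        have e : k - 1 + 1 = k := by omega
        rw [e] at hrec
        rcases hrec with h | h
        · exact Or.inl (hstep.trans h)
        · exact Or.inr (hstep.trans h)

/-- Cutting out a loop between equal vertices of a walk. -/
def cutW (w : Walk V) (a b : ℕ) : Walk V where
  len := w.len - (b - a)
  vert m := if m < a then w.vert m else w.vert (m + (b - a))
  intoL m := if m < a then w.intoL m else w.intoL (m + (b - a))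
  intoR m := if m < a then w.intoR m else w.intoR (m + (b - a))

lemma cut_ok {C : Set V} {w : Walk V} (hv : w.ValidOn G) (hnb : ¬ w.SigmaBlocked G C)
    {a b : ℕ} (hab : a < b) (hble : b ≤ w.len) (heq : w.vert a = w.vert b)
    (hvz : 0 < a → b < w.len → ∃ c ∈ C, G.Anc (w.vert a) c) :
    (cutW w a b).ValidOn G ∧ (cutW w a b).first = w.first ∧ (cutW w a b).last = w.last ∧
      ¬ (cutW w a b).SigmaBlocked G C := by
  have hlen : (cutW w a b).len = w.len - (b - a) := rfl
  have hvge : ∀ m, a ≤ m → (cutW w a b).vert m = w.vert (m + (b - a)) := by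
    intro m hm; exact if_neg (by omega)
  have hvle : ∀ m, m ≤ a → (cutW w a b).vert m = w.vert m := by
    intro m hm
    rcases lt_or_eq_of_le hm with h' | h'
    · exact if_pos h'
    · subst h'
      rw [hvge m le_rfl]
      have e : m + (b - m) = b := by omega
      rw [e]
      exact heq.symm
  have hLlt : ∀ m, m < a → (cutW w a b).intoL m = w.intoL m := by
    intro m hm; exact if_pos hm
  have hLge : ∀ m, a ≤ m → (cutW w a b).intoL m = w.intoL (m + (b - a)) := by
    intro m hm; exact if_neg (by omega)
  have hRlt : ∀ m, m < a → (cutW w a b).intoR m = w.intoR m := by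
    intro m hm; exact if_pos hm
  have hRge : ∀ m, a ≤ m → (cutW w a b).intoR m = w.intoR (m + (b - a)) := by
    intro m hm; exact if_neg (by omega)
  have hval : (cutW w a b).ValidOn G := by
    intro m hm
    rw [hlen] at hm
    by_cases hma : m < a
    · have e1 := hvle m (by omega)
      have e2 := hvle (m+1) (by omega)
      rw [hLlt m hma, hRlt m hma, e1, e2]
      exact hv m (by omega)
    · push_neg at hma
      have e1 := hvge m hma
      have e2 : (cutW w a b).vert (m+1) = w.vert (m + (b - a) + 1) := by
        rw [hvge (m+1) (by omega)]
        congr 1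
        omega
      rw [hLge m hma, hRge m hma, e1, e2]
      exact hv _ (by omega)
  have hfst : (cutW w a b).first = w.first := hvle 0 (Nat.zero_le _)
  have hlst : (cutW w a b).last = w.last := by
    show (cutW w a b).vert (w.len - (b - a)) = w.vert w.len
    rw [hvge _ (by omega)]
    congr 1
    omega
  refine ⟨hval, hfst, hlst, ?_⟩
  rintro (h1 | h1 | ⟨m, hC, hno⟩ | ⟨m, hNC, hmC, hpt⟩)
  · exact hnb (Or.inl (hfst ▸ h1))
  · exact hnb (Or.inr (Or.inl (hlst ▸ h1)))
  · obtain ⟨⟨hm0, hmlen⟩, hR, hL⟩ := hC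
    rw [hlen] at hmlen
    rcases lt_trichotomy m a with hma | hma | hma
    · apply hnb
      refine Or.inr (Or.inr (Or.inl ⟨m, ⟨⟨hm0, by omega⟩, ?_, ?_⟩, ?_⟩))
      · rw [← hRlt (m-1) (by omega)]
        exact hR
      · rw [← hLlt m hma]
        exact hL
      · rw [← hvle m (by omega)]
        exact hno
    · subst hma
      apply hno
      obtain ⟨c, hc, hAc⟩ := hvz hm0 (by omega)
      exact ⟨c, hc, by rw [hvle m le_rfl]; exact hAc⟩
    · apply hnb
      refine Or.inr (Or.inr (Or.inl ⟨m + (b - a), ⟨⟨by omega, by omega⟩, ?_, ?_⟩, ?_⟩))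
      · have hx : w.intoR (m - 1 + (b - a)) = true := by
          rw [← hRge (m-1) (by omega)]
          exact hR
        have e : m - 1 + (b - a) = m + (b - a) - 1 := by omega
        rw [← e]
        exact hx
      · rw [← hLge m (by omega)]
        exact hL
      · rw [← hvge m (by omega)]
        exact hno
  · obtain ⟨⟨hm0, hmlen⟩, hnotc⟩ := hNC
    rw [hlen] at hmlen
    rcases lt_trichotomy m a with hma | hma | hma
    · have hnotc' : ¬ (w.intoR (m-1) = true ∧ w.intoL m = true) := by
        rintro ⟨h1, h2⟩
        exact hnotc ⟨by rw [hRlt (m-1) (by omega)]; exact h1, by rw [hLlt m hma]; exact h2⟩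
      have hmC' : w.vert m ∈ C := by
        rw [← hvle m (by omega)]
        exact hmC
      have hpt' : (w.PointsLeft m ∧ ¬ G.Scc (w.vert m) (w.vert (m-1))) ∨
          (w.PointsRight m ∧ ¬ G.Scc (w.vert m) (w.vert (m+1))) := by
        rcases hpt with ⟨hp, hs⟩ | ⟨hp, hs⟩
        · left
          refine ⟨⟨?_, ?_⟩, ?_⟩
          · rw [← hLlt (m-1) (by omega)]; exact hp.1
          · rw [← hRlt (m-1) (by omega)]; exact hp.2
          · rw [← hvle m (by omega), ← hvle (m-1) (by omega)]; exact hs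
        · right
          refine ⟨⟨?_, ?_⟩, ?_⟩
          · rw [← hLlt m hma]; exact hp.1
          · rw [← hRlt m hma]; exact hp.2
          · rw [← hvle m (by omega), ← hvle (m+1) (by omega)]; exact hs
      exact hnb (Or.inr (Or.inr (Or.inr ⟨m, ⟨⟨hm0, by omega⟩, hnotc'⟩, hmC', hpt'⟩)))
    · subst hma
      have hmCw : w.vert m ∈ C := by
        rw [← hvle m le_rfl]
        exact hmC
      rcases hpt with ⟨hp, hs⟩ | ⟨hp, hs⟩
      · have hA : w.intoL (m-1) = true := by
          rw [← hLlt (m-1) (by omega)]; exact hp.1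
        have hB : w.intoR (m-1) = false := by
          rw [← hRlt (m-1) (by omega)]; exact hp.2
        have hs' : ¬ G.Scc (w.vert m) (w.vert (m-1)) := by
          rw [← hvle m le_rfl, ← hvle (m-1) (by omega)]
          exact hs
        apply hnb
        refine Or.inr (Or.inr (Or.inr ⟨m, ⟨⟨hm0, by omega⟩, ?_⟩, hmCw, Or.inl ⟨⟨hA, hB⟩, hs'⟩⟩))
        rintro ⟨h1, _⟩
        rw [hB] at h1
        exact Bool.noConfusion h1
      · have eab : m + (b - m) = b := by omega
        have hA : w.intoL b = false := by
          have := hp.1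
          rw [hLge m le_rfl, eab] at this
          exact this
        have hB : w.intoR b = true := by
          have := hp.2
          rw [hRge m le_rfl, eab] at this
          exact this
        have hmCb : w.vert b ∈ C := by
          rw [← heq]
          exact hmCw
        have hs' : ¬ G.Scc (w.vert b) (w.vert (b+1)) := by
          have e2 : (cutW w m b).vert (m+1) = w.vert (b+1) := by
            rw [hvge (m+1) (by omega)]
            congr 1
            omega
          rw [← heq, ← hvle m le_rfl, ← e2]
          exact hs
        apply hnb
        refine Or.inr (Or.inr (Or.inr ⟨b, ⟨⟨by omega, by omega⟩, ?_⟩, hmCb, Or.inr ⟨⟨hA, hB⟩, hs'⟩⟩))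
        rintro ⟨_, h2⟩
        rw [hA] at h2
        exact Bool.noConfusion h2
    · have e1 : m - 1 + (b - a) = m + (b - a) - 1 := by omega
      have hnotc' : ¬ (w.intoR (m + (b - a) - 1) = true ∧ w.intoL (m + (b - a)) = true) := by
        rintro ⟨h1, h2⟩
        refine hnotc ⟨?_, ?_⟩
        · rw [hRge (m-1) (by omega), e1]
          exact h1
        · rw [hLge m (by omega)]
          exact h2
      have hmC' : w.vert (m + (b - a)) ∈ C := by
        rw [← hvge m (by omega)]
        exact hmC
      have hpt' : (w.PointsLeft (m + (b - a)) ∧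
            ¬ G.Scc (w.vert (m + (b - a))) (w.vert (m + (b - a) - 1))) ∨
          (w.PointsRight (m + (b - a)) ∧
            ¬ G.Scc (w.vert (m + (b - a))) (w.vert (m + (b - a) + 1))) := by
        rcases hpt with ⟨hp, hs⟩ | ⟨hp, hs⟩
        · left
          refine ⟨⟨?_, ?_⟩, ?_⟩
          · rw [← e1, ← hLge (m-1) (by omega)]; exact hp.1
          · rw [← e1, ← hRge (m-1) (by omega)]; exact hp.2
          · rw [← hvge m (by omega), ← e1, ← hvge (m-1) (by omega)]; exact hs
        · right
          have e2 : m + 1 + (b - a) = m + (b - a) + 1 := by omega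
          refine ⟨⟨?_, ?_⟩, ?_⟩
          · rw [← hLge m (by omega)]; exact hp.1
          · rw [← hRge m (by omega)]; exact hp.2
          · rw [← hvge m (by omega), ← e2, ← hvge (m+1) (by omega)]; exact hs
      exact hnb (Or.inr (Or.inr (Or.inr ⟨m + (b - a),
        ⟨⟨by omega, by omega⟩, hnotc'⟩, hmC', hpt'⟩)))

lemma inducingPath_of_not_blocked (hij : i ≠ j) :
    ∀ L (w : Walk V), w.len ≤ L → w.ValidOn G → w.first = i → w.last = j →
      ¬ w.SigmaBlocked G (Z0 G i j) → G.InducingPath i j := by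
  intro L
  induction L with
  | zero =>
    intro w hL hv hf hl hnb
    have h0 : w.len = 0 := by omega
    have hx : i = j := by
      rw [← hf, ← hl]
      show w.vert 0 = w.vert w.len
      rw [h0]
    exact absurd hx hij
  | succ L ih =>
    intro w hL hv hf hl hnb
    by_cases hp : w.IsPath
    · refine ⟨w, hv, hf, hl, hp, ?_, ?_⟩
      · intro k hk
        have hex : ∃ c ∈ Z0 G i j, G.Anc (w.vert k) c := by
          by_contra hno
          exact hnb (Or.inr (Or.inr (Or.inl ⟨k, hk, hno⟩)))
        obtain ⟨c, hcZ, hAc⟩ := hex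
        rcases hcZ.1 with h | h
        · exact Or.inl (by rw [hf]; exact hAc.trans h)
        · exact Or.inr (by rw [hl]; exact hAc.trans h)
      · intro k hk
        have hk0 : 0 < k := hk.1.1
        have hklen : k < w.len := hk.1.2
        have hnei : w.vert k ≠ i := by
          intro h
          have hx : k = 0 := hp k (by omega) 0 (by omega) (by rw [h]; exact hf.symm)
          omega
        have hnej : w.vert k ≠ j := by
          intro h
          have hx : k = w.len := hp k (by omega) w.len (by omega) (by rw [h]; exact hl.symm)
          omega
        have hAE : G.Anc (w.vert k) i ∨ G.Anc (w.vert k) j := by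
          by_cases hLk : w.intoL k = true
          · have hRk : w.intoR (k-1) = false := by
              rcases Bool.eq_false_or_eq_true (w.intoR (k-1)) with h | h
              · exact absurd ⟨h, hLk⟩ hk.2
              · exact h
            have hrec := Llem hv hf hnb (k-1) (by omega) hRk
            have e : k - 1 + 1 = k := by omega
            rw [e] at hrec
            exact hrec
          · have hLk' : w.intoL k = false := by
              rcases Bool.eq_false_or_eq_true (w.intoL k) with h | h
              · exact absurd h hLk
              · exact h
            exact Rlem hv hl hnb (w.len - k) k rfl hklen hLk'
        have hZ : w.vert k ∈ Z0 G i j := ⟨hAE, hnei, hnej⟩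
        constructor
        · intro hPL
          by_contra hS
          exact hnb (Or.inr (Or.inr (Or.inr ⟨k, hk, hZ, Or.inl ⟨hPL, hS⟩⟩)))
        · intro hPR
          by_contra hS
          exact hnb (Or.inr (Or.inr (Or.inr ⟨k, hk, hZ, Or.inr ⟨hPR, hS⟩⟩)))
    · have hrep : ∃ a b, a < b ∧ b ≤ w.len ∧ w.vert a = w.vert b := by
        rw [Walk.IsPath] at hp
        push_neg at hp
        obtain ⟨x, hx, y, hy, hxy, hne⟩ := hp
        rcases lt_or_gt_of_ne hne with h | h
        · exact ⟨x, y, h, hy, hxy⟩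
        · exact ⟨y, x, h, hx, hxy.symm⟩
      obtain ⟨a, b, hab, hble, heq⟩ := hrep
      by_cases hmid : ∃ m, 0 < m ∧ m < w.len ∧ (w.vert m = i ∨ w.vert m = j)
      · obtain ⟨m, hm0, hmlen, hmv⟩ := hmid
        rcases hmv with hmv | hmv
        · have heq0 : w.vert 0 = w.vert m := by rw [hmv]; exact hf
          obtain ⟨hv', hf', hl', hnb'⟩ :=
            cut_ok hv hnb hm0 (by omega) heq0 (fun h _ => absurd h (lt_irrefl 0))
          refine ih (cutW w 0 m) ?_ hv' (by rw [hf', hf]) (by rw [hl', hl]) hnb'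
          show w.len - (m - 0) ≤ L
          omega
        · have heqm : w.vert m = w.vert w.len := by rw [hmv]; exact hl.symm
          obtain ⟨hv', hf', hl', hnb'⟩ :=
            cut_ok hv hnb hmlen le_rfl heqm (fun _ h => absurd h (lt_irrefl _))
          refine ih (cutW w m w.len) ?_ hv' (by rw [hf', hf]) (by rw [hl', hl]) hnb'
          show w.len - (w.len - m) ≤ L
          omega
      · push_neg at hmid
        have hne0 : ¬ (a = 0 ∧ b = w.len) := by
          rintro ⟨rfl, rfl⟩
          exact hij (by rw [← hf, ← hl]; exact heq)
        have hvz : 0 < a → b < w.len → ∃ c ∈ Z0 G i j, G.Anc (w.vert a) c := by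
          intro ha0 hblen
          have halen : a < w.len := by omega
          by_cases hcol : w.intoR (a-1) = true ∧ w.intoL a = true
          · by_contra hno
            exact hnb (Or.inr (Or.inr (Or.inl ⟨a, ⟨⟨ha0, halen⟩, hcol.1, hcol.2⟩, hno⟩)))
          · have hAE : G.Anc (w.vert a) i ∨ G.Anc (w.vert a) j := by
              by_cases hLk : w.intoL a = true
              · have hRk : w.intoR (a-1) = false := by
                  rcases Bool.eq_false_or_eq_true (w.intoR (a-1)) with h | h
                  · exact absurd ⟨h, hLk⟩ hcol
                  · exact h
                have hrec := Llem hv hf hnb (a-1) (by omega) hRk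
                have e : a - 1 + 1 = a := by omega
                rw [e] at hrec
                exact hrec
              · have hLk' : w.intoL a = false := by
                  rcases Bool.eq_false_or_eq_true (w.intoL a) with h | h
                  · exact absurd h hLk
                  · exact h
                exact Rlem hv hl hnb (w.len - a) a rfl halen hLk'
            exact ⟨w.vert a, ⟨hAE, (hmid a ha0 halen).1, (hmid a ha0 halen).2⟩,
              Relation.ReflTransGen.refl⟩
        have hlen1 : 0 < w.len := by omega
        obtain ⟨hv', hf', hl', hnb'⟩ := cut_ok hv hnb hab hble heq hvz
        refine ih (cutW w a b) ?_ hv' (by rw [hf', hf]) (by rw [hl', hl]) hnb'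
        show w.len - (b - a) ≤ L
        omega

end InducingAux

/-- for a DMG `G` and distinct nodes `i`, `j`, the following are
equivalent: (i) there is an inducing path between `i` and `j`; (ii) there is an
inducing walk between `i` and `j`; (iii) `i` and `j` are σ-connected given every
`Z ⊆ V ∖ {i,j}`. -/
theorem statement0 (G : DMG V) (i j : V) (hij : i ≠ j) :
    (G.InducingPath i j ↔ G.InducingWalk i j) ∧
    (G.InducingWalk i j ↔ ∀ Z : Set V, i ∉ Z → j ∉ Z → G.SigmaConnected i j Z) := by
  have hC : G.InducingWalk i j → ∀ Z : Set V, i ∉ Z → j ∉ Z → G.SigmaConnected i j Z :=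
    connected_of_inducingWalk
  have hA : (∀ Z : Set V, i ∉ Z → j ∉ Z → G.SigmaConnected i j Z) → G.InducingPath i j := by
    intro h
    have hi : i ∉ Z0 G i j := fun hmem => hmem.2.1 rfl
    have hj : j ∉ Z0 G i j := fun hmem => hmem.2.2 rfl
    obtain ⟨w, hv, hf, hl, hnb⟩ := h _ hi hj
    exact inducingPath_of_not_blocked hij w.len w le_rfl hv hf hl hnb
  have hPW : G.InducingPath i j → G.InducingWalk i j := by
    rintro ⟨w, a, b, c, _, e⟩
    exact ⟨w, a, b, c, e⟩
  exact ⟨⟨hPW, fun h => hA (hC h)⟩, ⟨fun h => hC h, fun h => hPW (hA h)⟩⟩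

end CausalGraphs
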